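/- Let v be a time-dependent C¹ velocity field on ℝ³ with flow map α, let ρ be C¹ and satisfy the continuity equation ∂_t ρ + v^a ∂_a ρ = −ρ ∂_a v^a, and let G be a bounded open set with 0 < vol(G) < ∞. Then the volume-averaged density ⟨ρ⟩(t) = V(t)^{-1} ∫_{G_t} ρ(t,x) d³x is differentiable and satisfies the exact coarse-grained continuity equation d/dt ⟨ρ⟩(t) = −⟨ρ⟩(t) · ⟨div v⟩(t), where ⟨div v⟩(t) = V(t)^{-1} ∫_{G_t} ∂_a v^a(t,x) d³x. -/

import Mathlib

open MeasureTheory Real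
open scoped ENNReal
noncomputable section

/-- ℝ³ with Cartesian coordinates. -/
abbrev V3 := Fin 3 → ℝ

/-- Partial derivative `∂_i f (x)` of a scalar function on ℝ³. -/
def pd (f : V3 → ℝ) (i : Fin 3) (x : V3) : ℝ := fderiv ℝ f x (Pi.single i 1)

/-- `α` is a comoving flow map for the time-dependent velocity field `v` with
initial time `t₀`: `α(t₀,·) = id`, each `α(t,·)` is a C¹ diffeomorphism of ℝ³,
and `∂ₜ α(t,x) = v(t, α(t,x))`. -/
def IsFlowMap (v : ℝ → V3 → V3) (t₀ : ℝ) (α : ℝ → V3 → V3) : Prop :=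
  (∀ x, α t₀ x = x) ∧
  (∀ t, Function.Bijective (α t) ∧ ContDiff ℝ 1 (α t) ∧
    ContDiff ℝ 1 (Function.invFun (α t))) ∧
  (∀ t x, HasDerivAt (fun s => α s x) (v t (α t x)) t)

/-- The volume of the comoving domain `G_t = α(t,G)`. -/
def volAt (α : ℝ → V3 → V3) (G : Set V3) (t : ℝ) : ℝ := (volume (α t '' G)).toReal

/-- Volume average of a time-dependent function over the comoving domain. -/
def avg (α : ℝ → V3 → V3) (G : Set V3) (f : ℝ → V3 → ℝ) (t : ℝ) : ℝ :=
  (volAt α G t)⁻¹ * ∫ x in α t '' G, f t x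

/-!
Along a trajectory `s ↦ α s y` the continuity equation gives `d/ds ρ(s, α s y) = -ρ div v`,
while the variational equation `∂ₜ Dα = Dv(α) ∘ Dα` and Jacobi's formula give
`∂ₜ det Dα = div v(α) · det Dα`, so `det Dα = exp ∫ div v(α) > 0`. Hence
`ρ(t, α t y) · det Dα(t, y)` is conserved: by change of variables the mass `∫_{G_t} ρ` is constant,
and `V(t) = ∫_G det Dα` has derivative `∫_{G_t} div v`. Writing `⟨ρ⟩ = m / V` then gives
`d⟨ρ⟩/dt = -(m / V) (V' / V)`.

Since `α t` is only assumed C¹ in space for each fixed time, joint continuity of `α` and the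
variational equation are first derived from the ODE, by a local Grönwall estimate that keeps
nearby trajectories inside the balls where `v` is Lipschitz.
-/

open Set Filter Topology Metric
open scoped NNReal

section Trajectories

variable {E : Type*} [NormedAddCommGroup E] [NormedSpace ℝ E]

theorem dist_le_of_nearby_trajectories_ODE {v : ℝ → E → E} {f g : ℝ → E} {a b : ℝ} {L : ℝ≥0}
    (hf : ∀ t, HasDerivAt f (v t (f t)) t) (hg : ∀ t, HasDerivAt g (v t (g t)) t)
    (hv : ∀ t ∈ Icc a b, LipschitzOnWith L (v t) (closedBall (g t) 1))
    (hd : dist (f a) (g a) ≤ exp (-((L + 1) * (b - a)))) :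
    ∀ t ∈ Icc a b, dist (f t) (g t) ≤ dist (f a) (g a) * exp (L * (t - a)) := by
  have hbarrier : ∀ t ≤ b, exp ((L + 1) * (t - b)) ≤ 1 := fun t ht =>
    exp_le_one_iff.2 (mul_nonpos_of_nonneg_of_nonpos (by positivity) (by linarith))
  -- fencing with the barrier `exp ((L + 1) (t - b)) ≤ 1` keeps `f t` in the ball around `g t`
  have hstay : ∀ t ∈ Icc a b, ‖f t - g t‖ ≤ exp ((L + 1) * (t - b)) := by
    refine image_norm_le_of_norm_deriv_right_lt_deriv_boundary
      (f := fun t => f t - g t) (f' := fun t => v t (f t) - v t (g t))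
      (B' := fun t => exp ((L + 1) * (t - b)) * (L + 1))
      (fun t _ => ((hf t).sub (hg t)).continuousAt.continuousWithinAt)
      (fun t _ => ((hf t).sub (hg t)).hasDerivWithinAt) ?_ ?_ ?_
    · rw [← dist_eq_norm]
      convert hd using 2
      ring
    · intro t
      simpa using (((hasDerivAt_id t).sub_const b).const_mul (L + 1 : ℝ)).exp
    · intro t ht hft
      have hmem : f t ∈ closedBall (g t) 1 := by
        rw [mem_closedBall, dist_eq_norm, hft]
        exact hbarrier t ht.2.le
      calc ‖v t (f t) - v t (g t)‖ ≤ L * ‖f t - g t‖ := by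
            rw [← dist_eq_norm, ← dist_eq_norm]
            exact (hv t (Ico_subset_Icc_self ht)).dist_le_mul _ hmem _
              (mem_closedBall_self zero_le_one)
        _ < exp ((L + 1) * (t - b)) * (L + 1) := by
            rw [hft, mul_comm]
            exact mul_lt_mul_of_pos_left (by linarith) (exp_pos _)
  refine dist_le_of_trajectories_ODE_of_mem (s := fun t => closedBall (g t) 1)
    (fun t ht => hv t (Ico_subset_Icc_self ht)) (fun t _ => (hf t).continuousAt.continuousWithinAt)
    (fun t _ => (hf t).hasDerivWithinAt) (fun t ht => ?_)
    (fun t _ => (hg t).continuousAt.continuousWithinAt) (fun t _ => (hg t).hasDerivWithinAt)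
    (fun t _ => mem_closedBall_self zero_le_one) le_rfl
  rw [mem_closedBall, dist_eq_norm]
  exact (hstay t (Ico_subset_Icc_self ht)).trans (hbarrier t ht.2.le)

theorem dist_le_of_nearby_trajectories_ODE_of_mem_Icc {v : ℝ → E → E} {f g : ℝ → E}
    {a b t₀ : ℝ} {L : ℝ≥0}
    (hf : ∀ t, HasDerivAt f (v t (f t)) t) (hg : ∀ t, HasDerivAt g (v t (g t)) t)
    (hv : ∀ t ∈ Icc a b, LipschitzOnWith L (v t) (closedBall (g t) 1)) (ht₀ : t₀ ∈ Icc a b)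
    (hd : dist (f t₀) (g t₀) ≤ exp (-((L + 1) * (b - a)))) :
    ∀ t ∈ Icc a b, dist (f t) (g t) ≤ dist (f t₀) (g t₀) * exp (L * (b - a)) := by
  have hexp : ∀ {c d : ℝ}, c ≤ d → exp (-((L + 1) * d)) ≤ exp (-((L + 1) * c)) := fun h =>
    exp_le_exp.2 (neg_le_neg (mul_le_mul_of_nonneg_left h (by positivity)))
  intro t ht
  refine le_trans ?_ (mul_le_mul_of_nonneg_left (exp_le_exp.2
    (mul_le_mul_of_nonneg_left (?_ : |t - t₀| ≤ b - a) L.2)) dist_nonneg)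
  rcases le_total t₀ t with h | h
  · rw [abs_of_nonneg (sub_nonneg.2 h)]
    exact dist_le_of_nearby_trajectories_ODE hf hg (fun s hs => hv s ⟨ht₀.1.trans hs.1, hs.2⟩)
      (hd.trans (hexp (by linarith [ht₀.1]))) t ⟨h, ht.2⟩
  · -- run time backwards: `s ↦ f (-s)` solves the ODE with field `-v (-s)`
    have hrev : ∀ {h : ℝ → E}, (∀ t, HasDerivAt h (v t (h t)) t) →
        ∀ s, HasDerivAt (fun s => h (-s)) (-v (-s) (h (-s))) s := fun hh s => by
      simpa [Function.comp_def] using (hh (-s)).scomp s (hasDerivAt_neg s)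
    have := dist_le_of_nearby_trajectories_ODE (v := fun s x => -v (-s) x)
      (f := fun s => f (-s)) (g := fun s => g (-s)) (a := -t₀) (b := -a) (hrev hf) (hrev hg)
      (fun s hs => LipschitzOnWith.of_dist_le_mul fun x hx y hy => by
        simpa only [dist_neg_neg] using
          (hv (-s) ⟨by linarith [hs.2], by linarith [hs.1, ht₀.2]⟩).dist_le_mul x hx y hy)
      (by simpa using hd.trans (hexp (c := -a - -t₀) (by linarith [ht₀.2])))
      (-t) ⟨by linarith, by linarith [ht.1]⟩
    rw [abs_of_nonpos (sub_nonpos.2 h)]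
    simpa [show -t - -t₀ = -(t - t₀) by ring] using this
  · rw [abs_le]
    constructor <;> linarith [ht.1, ht.2, ht₀.1, ht₀.2]

end Trajectories

section Parametric

variable {X E F : Type*} [NormedAddCommGroup X] [NormedSpace ℝ X] [NormedAddCommGroup E]
  [NormedSpace ℝ E] [NormedAddCommGroup F] [NormedSpace ℝ F]

theorem continuous_fderiv_of_contDiff_uncurry {f : X → E → F}
    (hf : ContDiff ℝ 1 (fun p : X × E => f p.1 p.2)) :
    Continuous (fun p : X × E => fderiv ℝ (f p.1) p.2) :=
  (ContDiff.fderiv (f := fun p : X × E => f p.1) (g := Prod.snd) (n := 0)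
    (hf.comp (contDiff_fst.fst.prodMk contDiff_snd)) contDiff_snd (by norm_num)).continuous

theorem exists_lipschitzOnWith_closedBall [FiniteDimensional ℝ E] {v : ℝ → E → F}
    (hv : ContDiff ℝ 1 (fun p : ℝ × E => v p.1 p.2)) {γ : ℝ → E} (hγ : Continuous γ)
    (a b r : ℝ) : ∃ L : ℝ≥0, ∀ s ∈ Icc a b, LipschitzOnWith L (v s) (closedBall (γ s) r) := by
  have hK : IsCompact ((fun p : ℝ × E => (p.1, γ p.1 + p.2)) '' Icc a b ×ˢ closedBall 0 r) :=
    (isCompact_Icc.prod (isCompact_closedBall 0 r)).image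
      (continuous_fst.prodMk ((hγ.comp continuous_fst).add continuous_snd))
  obtain ⟨C, hC⟩ := hK.exists_bound_of_continuousOn
    (continuous_fderiv_of_contDiff_uncurry hv).continuousOn
  refine ⟨C.toNNReal, fun s hs => (convex_closedBall _ _).lipschitzOnWith_of_nnnorm_fderiv_le
    (fun x _ => (hv.comp (contDiff_const.prodMk contDiff_id)).differentiable one_ne_zero x)
    fun x hx => ?_⟩
  rw [← NNReal.coe_le_coe, coe_nnnorm]
  refine (hC (s, x) ⟨(s, x - γ s), ⟨hs, ?_⟩, by simp⟩).trans (Real.le_coe_toNNReal C)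
  rwa [mem_closedBall, dist_zero_right, ← dist_eq_norm]

theorem hasDerivAt_apply_of_differentiableAt_uncurry {f : ℝ → E → F} {c : ℝ → E} {c' : E}
    {t : ℝ} (hf : DifferentiableAt ℝ (fun p : ℝ × E => f p.1 p.2) (t, c t))
    (hc : HasDerivAt c c' t) :
    HasDerivAt (fun s => f s (c s)) (deriv (fun s => f s (c t)) t + fderiv ℝ (f t) (c t) c') t := by
  have hcurve : ∀ {d : ℝ → E} {d' : E}, d t = c t → HasDerivAt d d' t →
      HasDerivAt (fun s => f s (d s)) (fderiv ℝ (fun p : ℝ × E => f p.1 p.2) (t, c t) (1, d')) t :=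
    fun hd hd' => by
      rw [← hd] at hf ⊢
      exact hf.hasFDerivAt.comp_hasDerivAt t ((hasDerivAt_id t).prodMk hd')
  have hspace : fderiv ℝ (f t) (c t) =
      (fderiv ℝ (fun p : ℝ × E => f p.1 p.2) (t, c t)).comp (.inr ℝ ℝ E) :=
    (hf.hasFDerivAt.comp (c t) (hasFDerivAt_prodMk_right t (c t))).fderiv
  rw [(hcurve (d := fun _ => c t) rfl (hasDerivAt_const t (c t))).deriv, hspace]
  convert hcurve rfl hc using 1
  rw [ContinuousLinearMap.comp_apply, ← map_add]
  simp

end Parametric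

section Divergence

variable {E : Type*} [NormedAddCommGroup E] [NormedSpace ℝ E]

def divergence (f : E → E) (x : E) : ℝ := LinearMap.trace ℝ E (fderiv ℝ f x)

theorem continuous_divergence_of_contDiff_uncurry [FiniteDimensional ℝ E] {v : ℝ → E → E}
    (hv : ContDiff ℝ 1 (fun p : ℝ × E => v p.1 p.2)) :
    Continuous (fun p : ℝ × E => divergence (v p.1) p.2) :=
  (LinearMap.continuous_of_finiteDimensional
    ((LinearMap.trace ℝ E).comp (ContinuousLinearMap.coeLM ℝ))).comp
    (continuous_fderiv_of_contDiff_uncurry hv)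

end Divergence

theorem fderiv_apply_eq_sum_pd (g : V3 → ℝ) (x w : V3) :
    fderiv ℝ g x w = ∑ b, w b * pd g b x := by
  conv_lhs => rw [← (Pi.basisFun ℝ (Fin 3)).sum_repr w]
  simp [pd]

theorem divergence_eq_sum_pd {f : V3 → V3} {x : V3} (hf : DifferentiableAt ℝ f x) :
    divergence f x = ∑ a, pd (fun y => f y a) a x := by
  rw [divergence, LinearMap.trace_eq_matrix_trace ℝ (Pi.basisFun ℝ (Fin 3)), Matrix.trace]
  refine Finset.sum_congr rfl fun a _ => ?_
  rw [pd, (hasFDerivAt_pi'.1 hf.hasFDerivAt a).fderiv]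
  simp [LinearMap.toMatrix_eq_toMatrix', LinearMap.toMatrix'_apply]

theorem Matrix.hasDerivAt_det_fin_three {m : ℝ → Matrix (Fin 3) (Fin 3) ℝ}
    {b : Matrix (Fin 3) (Fin 3) ℝ} {t : ℝ}
    (hm : ∀ i j, HasDerivAt (fun s => m s i j) ((b * m t) i j) t) :
    HasDerivAt (fun s => (m s).det) (b.trace * (m t).det) t := by
  refine HasDerivAt.congr_of_eventuallyEq (((((((((hm 0 0).mul (hm 1 1)).mul (hm 2 2)).sub
    (((hm 0 0).mul (hm 1 2)).mul (hm 2 1))).sub (((hm 0 1).mul (hm 1 0)).mul (hm 2 2))).add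
    (((hm 0 1).mul (hm 1 2)).mul (hm 2 0))).add (((hm 0 2).mul (hm 1 0)).mul (hm 2 1))).sub
    (((hm 0 2).mul (hm 1 1)).mul (hm 2 0))).congr_deriv ?_) (Eventually.of_forall fun s => ?_)
  · simp only [Matrix.trace_fin_three, Matrix.mul_apply, Fin.sum_univ_three, Matrix.det_fin_three,
      Pi.mul_apply]
    ring
  · simp only [Matrix.det_fin_three, Pi.mul_apply, Pi.sub_apply, Pi.add_apply]

/-- Jacobi's formula along a solution of the linear equation `M' = A ∘ M`. -/
theorem hasDerivAt_det_of_hasDerivAt_comp {M : ℝ → V3 →L[ℝ] V3} {A : V3 →L[ℝ] V3} {t : ℝ}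
    (hM : HasDerivAt M (A.comp (M t)) t) :
    HasDerivAt (fun s => (M s).det) (LinearMap.trace ℝ V3 A * (M t).det) t := by
  have hentry : ∀ i j, HasDerivAt (fun s => LinearMap.toMatrix' (M s : V3 →ₗ[ℝ] V3) i j)
      ((LinearMap.toMatrix' (A : V3 →ₗ[ℝ] V3) * LinearMap.toMatrix' (M t : V3 →ₗ[ℝ] V3)) i j)
      t := by
    intro i j
    rw [← LinearMap.toMatrix'_mul]
    simpa [LinearMap.toMatrix'_apply] using
      hasDerivAt_pi.1 (hM.clm_apply (hasDerivAt_const t (Pi.single j 1 : V3))) i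
  convert Matrix.hasDerivAt_det_fin_three hentry using 1
  · simp only [LinearMap.det_toMatrix']
  · rw [LinearMap.det_toMatrix', ← Matrix.trace_toLin'_eq, Matrix.toLin'_toMatrix']

theorem eq_mul_exp_integral_of_hasDerivAt {f c : ℝ → ℝ} (hf : ∀ t, HasDerivAt f (c t * f t) t)
    (hc : Continuous c) (t₀ t : ℝ) : f t = f t₀ * exp (∫ s in t₀..t, c s) := by
  have hg : ∀ s, HasDerivAt (fun s => f s * exp (-∫ u in t₀..s, c u)) 0 s := fun s =>
    ((hf s).mul (hc.integral_hasStrictDerivAt t₀ s).hasDerivAt.neg.exp).congr_deriv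
      (by simp; ring)
  have := is_const_of_deriv_eq_zero (fun s => (hg s).differentiableAt) (fun s => (hg s).deriv) t t₀
  simp only [intervalIntegral.integral_same, neg_zero, exp_zero, mul_one] at this
  rw [← this, mul_assoc, ← exp_add, neg_add_cancel, exp_zero, mul_one]

namespace IsFlowMap

variable {v : ℝ → V3 → V3} {t₀ : ℝ} {α : ℝ → V3 → V3} {G : Set V3}

theorem continuous_trajectory (hα : IsFlowMap v t₀ α) (x : V3) : Continuous (fun s => α s x) :=
  continuous_iff_continuousAt.2 fun s => (hα.2.2 s x).continuousAt

theorem differentiable (hα : IsFlowMap v t₀ α) (t : ℝ) : Differentiable ℝ (α t) :=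
  (hα.2.1 t).2.1.differentiable one_ne_zero

theorem det_fderiv_self (hα : IsFlowMap v t₀ α) (y : V3) : (fderiv ℝ (α t₀) y).det = 1 := by
  rw [show α t₀ = id from funext hα.1, fderiv_id, ContinuousLinearMap.det,
    ContinuousLinearMap.coe_id, LinearMap.det_id]

theorem continuous_det_fderiv (hα : IsFlowMap v t₀ α) (t : ℝ) :
    Continuous (fun y => (fderiv ℝ (α t) y).det) :=
  ContinuousLinearMap.continuous_det.comp ((hα.2.1 t).2.1.continuous_fderiv one_ne_zero)

theorem exists_lipschitzOnWith_ball (hv : ContDiff ℝ 1 (fun p : ℝ × V3 => v p.1 p.2))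
    (hα : IsFlowMap v t₀ α) (x₀ : V3) (a b : ℝ) :
    ∃ ε > 0, ∃ C : ℝ≥0, ∀ s ∈ Icc a b, LipschitzOnWith C (α s) (ball x₀ ε) := by
  set a' := min a t₀
  set b' := max b t₀
  have ht₀ : t₀ ∈ Icc a' b' := ⟨min_le_right _ _, le_max_right _ _⟩
  obtain ⟨L, hL⟩ := exists_lipschitzOnWith_closedBall hv (hα.continuous_trajectory x₀) a' b' 2
  set r := exp (-((L + 1) * (b' - a')))
  have hr : r * exp (L * (b' - a')) ≤ 1 := by
    rw [← exp_add, exp_le_one_iff]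
    nlinarith [ht₀.1.trans ht₀.2]
  have hflow : ∀ x t, HasDerivAt (fun s => α s x) (v t (α t x)) t := fun x t => hα.2.2 t x
  have hnear : ∀ z ∈ ball x₀ r, ∀ s ∈ Icc a' b', dist (α s z) (α s x₀) ≤ 1 := by
    intro z hz s hs
    have hz' : dist (α t₀ z) (α t₀ x₀) ≤ r := by
      rw [hα.1, hα.1]
      exact (mem_ball.1 hz).le
    exact (dist_le_of_nearby_trajectories_ODE_of_mem_Icc (hflow z) (hflow x₀)
      (fun s hs => (hL s hs).mono (closedBall_subset_closedBall (by norm_num))) ht₀ hz' s hs).trans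
      ((mul_le_mul_of_nonneg_right hz' (exp_pos _).le).trans hr)
  refine ⟨r / 2, by positivity, ⟨exp (L * (b' - a')), (exp_pos _).le⟩, fun s hs => ?_⟩
  refine LipschitzOnWith.of_dist_le_mul fun y hy z hz => ?_
  have hyz : dist (α t₀ y) (α t₀ z) ≤ r := by
    rw [hα.1, hα.1]
    linarith [dist_triangle_right y z x₀, mem_ball.1 hy, mem_ball.1 hz]
  -- `v` is Lipschitz near `α s z`, which stays within distance 1 of `α s x₀`
  have hLz : ∀ u ∈ Icc a' b', LipschitzOnWith L (v u) (closedBall (α u z) 1) := fun u hu =>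
    (hL u hu).mono fun w hw => by
      rw [mem_closedBall] at hw ⊢
      linarith [dist_triangle w (α u z) (α u x₀),
        hnear z (ball_subset_ball (by linarith [(by positivity : 0 < r)]) hz) u hu]
  have := dist_le_of_nearby_trajectories_ODE_of_mem_Icc (hflow y) (hflow z) hLz ht₀ hyz s
    ⟨(min_le_left _ _).trans hs.1, hs.2.trans (le_max_left _ _)⟩
  rw [hα.1, hα.1, mul_comm] at this
  exact this

theorem continuous_uncurry (hv : ContDiff ℝ 1 (fun p : ℝ × V3 => v p.1 p.2))
    (hα : IsFlowMap v t₀ α) : Continuous (fun p : ℝ × V3 => α p.1 p.2) := by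
  refine continuous_iff_continuousAt.2 fun ⟨t, x⟩ => ?_
  obtain ⟨ε, hε, C, hC⟩ := hα.exists_lipschitzOnWith_ball hv x (t - 1) (t + 1)
  have hcont := continuousOn_prod_of_continuousOn_lipschitzOnWith' (fun p : ℝ × V3 => α p.1 p.2)
    C (fun s hs => hC s (Ioo_subset_Icc_self hs))
    (fun y _ => (hα.continuous_trajectory y).continuousOn) (s := Ioo (t - 1) (t + 1))
  exact hcont.continuousAt (prod_mem_nhds (Ioo_mem_nhds (by linarith) (by linarith))
    (ball_mem_nhds x hε))

theorem continuous_velocity_trajectory (hv : ContDiff ℝ 1 (fun p : ℝ × V3 => v p.1 p.2))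
    (hα : IsFlowMap v t₀ α) (y : V3) : Continuous (fun s => v s (α s y)) :=
  hv.continuous.comp (continuous_id.prodMk (hα.continuous_trajectory y))

theorem continuous_divergence_comp (hv : ContDiff ℝ 1 (fun p : ℝ × V3 => v p.1 p.2))
    (hα : IsFlowMap v t₀ α) : Continuous (fun p : ℝ × V3 => divergence (v p.1) (α p.1 p.2)) :=
  (continuous_divergence_of_contDiff_uncurry hv).comp
    (continuous_fst.prodMk (hα.continuous_uncurry hv))

theorem eq_add_integral (hv : ContDiff ℝ 1 (fun p : ℝ × V3 => v p.1 p.2))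
    (hα : IsFlowMap v t₀ α) (t : ℝ) (y : V3) : α t y = y + ∫ s in t₀..t, v s (α s y) := by
  rw [intervalIntegral.integral_eq_sub_of_hasDerivAt (fun s _ => hα.2.2 s y)
    ((hα.continuous_velocity_trajectory hv y).intervalIntegrable _ _), hα.1]
  abel

theorem exists_norm_fderiv_comp_le (hv : ContDiff ℝ 1 (fun p : ℝ × V3 => v p.1 p.2))
    (hα : IsFlowMap v t₀ α) (x₀ : V3) (a b : ℝ) :
    ∃ ε > 0, ∃ M, ∀ s ∈ Icc a b, ∀ y ∈ ball x₀ ε,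
      ‖(fderiv ℝ (v s) (α s y)).comp (fderiv ℝ (α s) y)‖ ≤ M := by
  obtain ⟨ε, hε, C, hC⟩ := hα.exists_lipschitzOnWith_ball hv x₀ a b
  obtain ⟨B, hB⟩ :=
    (isCompact_Icc.prod (isCompact_closedBall x₀ (ε / 2))).exists_bound_of_continuousOn
    ((continuous_fderiv_of_contDiff_uncurry hv).comp
      (continuous_fst.prodMk (hα.continuous_uncurry hv))).continuousOn
  refine ⟨ε / 2, by positivity, B * C, fun s hs y hy => ?_⟩
  have hvB : ‖fderiv ℝ (v s) (α s y)‖ ≤ B := hB (s, y) ⟨hs, ball_subset_closedBall hy⟩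
  have hαC : ‖fderiv ℝ (α s) y‖ ≤ C := norm_fderiv_le_of_lipschitzOn ℝ
    (isOpen_ball.mem_nhds (ball_subset_ball (by linarith) hy)) (hC s hs)
  exact (ContinuousLinearMap.opNorm_comp_le _ _).trans
    (mul_le_mul hvB hαC (norm_nonneg _) ((norm_nonneg _).trans hvB))

theorem aestronglyMeasurable_fderiv_comp (hv : ContDiff ℝ 1 (fun p : ℝ × V3 => v p.1 p.2))
    (hα : IsFlowMap v t₀ α) (x : V3) (μ : Measure ℝ) :
    AEStronglyMeasurable (fun s => (fderiv ℝ (v s) (α s x)).comp (fderiv ℝ (α s) x)) μ :=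
  (ContinuousLinearMap.compL ℝ V3 V3 V3).aestronglyMeasurable_comp₂
    ((continuous_fderiv_of_contDiff_uncurry hv).comp
      (continuous_id.prodMk (hα.continuous_trajectory x))).aestronglyMeasurable
    ((measurable_fderiv_with_param ℝ (hα.continuous_uncurry hv)).comp
      (measurable_id.prodMk measurable_const)).aestronglyMeasurable

theorem intervalIntegrable_fderiv_comp (hv : ContDiff ℝ 1 (fun p : ℝ × V3 => v p.1 p.2))
    (hα : IsFlowMap v t₀ α) (x : V3) (a b : ℝ) :
    IntervalIntegrable (fun s => (fderiv ℝ (v s) (α s x)).comp (fderiv ℝ (α s) x)) volume a b := by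
  obtain ⟨ε, hε, M, hM⟩ := hα.exists_norm_fderiv_comp_le hv x (min a b) (max a b)
  exact (intervalIntegrable_const (c := M)).mono_fun' (hα.aestronglyMeasurable_fderiv_comp hv x _)
    (ae_restrict_of_forall_mem measurableSet_uIoc fun s hs =>
      hM s (uIoc_subset_uIcc hs) x (mem_ball_self hε))

theorem fderiv_eq_one_add_integral (hv : ContDiff ℝ 1 (fun p : ℝ × V3 => v p.1 p.2))
    (hα : IsFlowMap v t₀ α) (t : ℝ) (x : V3) :
    fderiv ℝ (α t) x = 1 + ∫ s in t₀..t, (fderiv ℝ (v s) (α s x)).comp (fderiv ℝ (α s) x) := by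
  obtain ⟨ε, hε, M, hM⟩ := hα.exists_norm_fderiv_comp_le hv x (min t₀ t) (max t₀ t)
  -- differentiate the integral equation `α t y = y + ∫ v s (α s y)` under the integral sign
  have hint := intervalIntegral.hasFDerivAt_integral_of_dominated_of_fderiv_le (μ := volume)
    (F := fun y s => v s (α s y)) (bound := fun _ => M) (ball_mem_nhds x hε)
    (Eventually.of_forall fun y => (hα.continuous_velocity_trajectory hv y).aestronglyMeasurable)
    ((hα.continuous_velocity_trajectory hv x).intervalIntegrable _ _)
    (hα.aestronglyMeasurable_fderiv_comp hv x _)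
    (ae_of_all _ fun s hs y hy => hM s (uIoc_subset_uIcc hs) y hy) intervalIntegrable_const
    (ae_of_all _ fun s _ y _ =>
      ((hv.comp (contDiff_const.prodMk contDiff_id)).differentiable one_ne_zero _).hasFDerivAt.comp
        y (hα.differentiable s y).hasFDerivAt)
  rw [funext (hα.eq_add_integral hv t)]
  exact ((hasFDerivAt_id x).add hint).fderiv

theorem continuous_fderiv (hv : ContDiff ℝ 1 (fun p : ℝ × V3 => v p.1 p.2))
    (hα : IsFlowMap v t₀ α) (x : V3) : Continuous (fun s => fderiv ℝ (α s) x) :=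
  (continuous_const.add (intervalIntegral.continuous_primitive
    (hα.intervalIntegrable_fderiv_comp hv x) t₀)).congr
    fun s => (hα.fderiv_eq_one_add_integral hv s x).symm

theorem hasDerivAt_fderiv (hv : ContDiff ℝ 1 (fun p : ℝ × V3 => v p.1 p.2))
    (hα : IsFlowMap v t₀ α) (t : ℝ) (x : V3) :
    HasDerivAt (fun s => fderiv ℝ (α s) x)
      ((fderiv ℝ (v t) (α t x)).comp (fderiv ℝ (α t) x)) t := by
  have hcont : Continuous (fun s => (fderiv ℝ (v s) (α s x)).comp (fderiv ℝ (α s) x)) :=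
    ((continuous_fderiv_of_contDiff_uncurry hv).comp
      (continuous_id.prodMk (hα.continuous_trajectory x))).clm_comp (hα.continuous_fderiv hv x)
  exact ((intervalIntegral.integral_hasDerivAt_right
    (hα.intervalIntegrable_fderiv_comp hv x _ _) (hcont.stronglyMeasurableAtFilter _ _)
    hcont.continuousAt).const_add 1).congr_of_eventuallyEq
    (Eventually.of_forall fun s => hα.fderiv_eq_one_add_integral hv s x)

theorem hasDerivAt_det_fderiv (hv : ContDiff ℝ 1 (fun p : ℝ × V3 => v p.1 p.2))
    (hα : IsFlowMap v t₀ α) (y : V3) (t : ℝ) :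
    HasDerivAt (fun s => (fderiv ℝ (α s) y).det)
      (divergence (v t) (α t y) * (fderiv ℝ (α t) y).det) t :=
  hasDerivAt_det_of_hasDerivAt_comp (hα.hasDerivAt_fderiv hv t y)

/-- Liouville's formula. -/
theorem det_fderiv_eq_exp (hv : ContDiff ℝ 1 (fun p : ℝ × V3 => v p.1 p.2))
    (hα : IsFlowMap v t₀ α) (t : ℝ) (y : V3) :
    (fderiv ℝ (α t) y).det = exp (∫ s in t₀..t, divergence (v s) (α s y)) := by
  rw [eq_mul_exp_integral_of_hasDerivAt (hα.hasDerivAt_det_fderiv hv y)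
    ((hα.continuous_divergence_comp hv).comp (continuous_id.prodMk continuous_const)) t₀ t,
    hα.det_fderiv_self, one_mul]

theorem det_fderiv_pos (hv : ContDiff ℝ 1 (fun p : ℝ × V3 => v p.1 p.2))
    (hα : IsFlowMap v t₀ α) (t : ℝ) (y : V3) : 0 < (fderiv ℝ (α t) y).det := by
  rw [hα.det_fderiv_eq_exp hv]
  exact exp_pos _

theorem det_fderiv_le (hv : ContDiff ℝ 1 (fun p : ℝ × V3 => v p.1 p.2))
    (hα : IsFlowMap v t₀ α) {t D : ℝ} {y : V3}
    (hD : ∀ s ∈ uIcc t₀ t, |divergence (v s) (α s y)| ≤ D) :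
    (fderiv ℝ (α t) y).det ≤ exp (D * |t - t₀|) := by
  rw [hα.det_fderiv_eq_exp hv]
  exact exp_le_exp.2 ((le_abs_self _).trans
    (intervalIntegral.norm_integral_le_of_norm_le_const (f := fun s => divergence (v s) (α s y))
      fun s hs => hD s (uIoc_subset_uIcc hs)))

theorem mul_det_fderiv_eq (hv : ContDiff ℝ 1 (fun p : ℝ × V3 => v p.1 p.2))
    (hα : IsFlowMap v t₀ α) {ρ : ℝ → V3 → ℝ} (hρ : ContDiff ℝ 1 (fun p : ℝ × V3 => ρ p.1 p.2))
    (hcont : ∀ t x, deriv (fun s => ρ s x) t + fderiv ℝ (ρ t) x (v t x)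
      = -ρ t x * divergence (v t) x) (t : ℝ) (y : V3) :
    ρ t (α t y) * (fderiv ℝ (α t) y).det = ρ t₀ y := by
  have hρα : ∀ s, HasDerivAt (fun s => ρ s (α s y))
      (-ρ s (α s y) * divergence (v s) (α s y)) s := fun s =>
    hcont s (α s y) ▸
      hasDerivAt_apply_of_differentiableAt_uncurry (hρ.differentiable one_ne_zero _) (hα.2.2 s y)
  have hconst : ∀ s, HasDerivAt (fun s => ρ s (α s y) * (fderiv ℝ (α s) y).det) 0 s := fun s =>
    ((hρα s).mul (hα.hasDerivAt_det_fderiv hv y s)).congr_deriv (by ring)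
  rw [is_const_of_deriv_eq_zero (fun s => (hconst s).differentiableAt)
    (fun s => (hconst s).deriv) t t₀, hα.1, hα.det_fderiv_self, mul_one]

theorem setIntegral_image (hv : ContDiff ℝ 1 (fun p : ℝ × V3 => v p.1 p.2))
    (hα : IsFlowMap v t₀ α) (hG : MeasurableSet G) (t : ℝ) (g : V3 → ℝ) :
    ∫ x in α t '' G, g x = ∫ y in G, (fderiv ℝ (α t) y).det * g (α t y) := by
  rw [integral_image_eq_integral_abs_det_fderiv_smul volume hG
    (fun y _ => (hα.differentiable t y).hasFDerivAt.hasFDerivWithinAt)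
    (hα.2.1 t).1.injective.injOn g]
  exact setIntegral_congr_fun hG fun y _ => by
    rw [abs_of_pos (hα.det_fderiv_pos hv t y), smul_eq_mul]

theorem setIntegral_image_eq_of_continuity_equation
    (hv : ContDiff ℝ 1 (fun p : ℝ × V3 => v p.1 p.2)) (hα : IsFlowMap v t₀ α)
    {ρ : ℝ → V3 → ℝ} (hρ : ContDiff ℝ 1 (fun p : ℝ × V3 => ρ p.1 p.2))
    (hcont : ∀ t x, deriv (fun s => ρ s x) t + fderiv ℝ (ρ t) x (v t x)
      = -ρ t x * divergence (v t) x) (hG : MeasurableSet G) (t : ℝ) :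
    ∫ x in α t '' G, ρ t x = ∫ y in G, ρ t₀ y := by
  rw [hα.setIntegral_image hv hG]
  exact setIntegral_congr_fun hG fun y _ => by rw [mul_comm, hα.mul_det_fderiv_eq hv hρ hcont]

theorem volAt_eq (hv : ContDiff ℝ 1 (fun p : ℝ × V3 => v p.1 p.2)) (hα : IsFlowMap v t₀ α)
    (hG : MeasurableSet G) (t : ℝ) : volAt α G t = ∫ y in G, (fderiv ℝ (α t) y).det := by
  simpa [volAt, Measure.real] using hα.setIntegral_image hv hG t fun _ => 1

theorem exists_abs_divergence_le (hv : ContDiff ℝ 1 (fun p : ℝ × V3 => v p.1 p.2))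
    (hα : IsFlowMap v t₀ α) (hG : Bornology.IsBounded G) (a b : ℝ) :
    ∃ D ≥ 0, ∀ s ∈ Icc a b, ∀ y ∈ G, |divergence (v s) (α s y)| ≤ D := by
  obtain ⟨D, hD⟩ := (isCompact_Icc.prod hG.isCompact_closure).exists_bound_of_continuousOn
    (hα.continuous_divergence_comp hv).continuousOn
  exact ⟨max D 0, le_max_right _ _, fun s hs y hy =>
    (hD (s, y) ⟨hs, subset_closure hy⟩).trans (le_max_left _ _)⟩

theorem integrableOn_det_fderiv (hv : ContDiff ℝ 1 (fun p : ℝ × V3 => v p.1 p.2))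
    (hα : IsFlowMap v t₀ α) (hGm : MeasurableSet G) (hGb : Bornology.IsBounded G)
    (hGfin : volume G < ⊤) (t : ℝ) : IntegrableOn (fun y => (fderiv ℝ (α t) y).det) G := by
  obtain ⟨D, -, hD⟩ := hα.exists_abs_divergence_le hv hGb (min t₀ t) (max t₀ t)
  refine Measure.integrableOn_of_bounded (M := exp (D * |t - t₀|)) hGfin.ne
    (hα.continuous_det_fderiv t).aestronglyMeasurable
    (ae_restrict_of_forall_mem hGm fun y hy => ?_)
  rw [Real.norm_eq_abs, abs_of_pos (hα.det_fderiv_pos hv t y)]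
  exact hα.det_fderiv_le hv fun s hs => hD s hs y hy

theorem volAt_pos (hv : ContDiff ℝ 1 (fun p : ℝ × V3 => v p.1 p.2)) (hα : IsFlowMap v t₀ α)
    (hGm : MeasurableSet G) (hGb : Bornology.IsBounded G) (hGpos : 0 < volume G)
    (hGfin : volume G < ⊤) (t : ℝ) : 0 < volAt α G t := by
  rw [hα.volAt_eq hv hGm, setIntegral_pos_iff_support_of_nonneg_ae
    (ae_of_all _ fun y => (hα.det_fderiv_pos hv t y).le)
    (hα.integrableOn_det_fderiv hv hGm hGb hGfin t)]
  have hsupp : Function.support (fun y => (fderiv ℝ (α t) y).det) = univ :=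
    eq_univ_of_forall fun y => (hα.det_fderiv_pos hv t y).ne'
  rwa [hsupp, univ_inter]

theorem hasDerivAt_volAt (hv : ContDiff ℝ 1 (fun p : ℝ × V3 => v p.1 p.2))
    (hα : IsFlowMap v t₀ α) (hGm : MeasurableSet G) (hGb : Bornology.IsBounded G)
    (hGfin : volume G < ⊤) (t : ℝ) :
    HasDerivAt (volAt α G) (∫ y in G, divergence (v t) (α t y) * (fderiv ℝ (α t) y).det) t := by
  set a := min t₀ (t - 1)
  set b := max t₀ (t + 1)
  obtain ⟨D, hD0, hD⟩ := hα.exists_abs_divergence_le hv hGb a b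
  have hball : ball t 1 ⊆ Icc a b := fun s hs => by
    rw [mem_ball, Real.dist_eq, abs_lt] at hs
    exact ⟨(min_le_right _ _).trans (by linarith), le_trans (by linarith) (le_max_right _ _)⟩
  have hbound : ∀ y ∈ G, ∀ s ∈ ball t 1,
      ‖divergence (v s) (α s y) * (fderiv ℝ (α s) y).det‖ ≤ D * exp (D * (b - a)) := by
    intro y hy s hs
    have hs' := hball hs
    have huIcc : uIcc t₀ s ⊆ Icc a b := uIcc_subset_Icc ⟨min_le_left _ _, le_max_left _ _⟩ hs'
    rw [norm_mul, Real.norm_eq_abs, Real.norm_eq_abs, abs_of_pos (hα.det_fderiv_pos hv s y)]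
    refine mul_le_mul (hD s hs' y hy) ((hα.det_fderiv_le hv fun u hu => hD u (huIcc hu) y hy).trans
      (exp_le_exp.2 (mul_le_mul_of_nonneg_left ?_ hD0))) (hα.det_fderiv_pos hv s y).le hD0
    rw [abs_le]
    constructor <;> linarith [hs'.1, hs'.2, min_le_left t₀ (t - 1), le_max_left t₀ (t + 1)]
  rw [funext (hα.volAt_eq hv hGm)]
  exact (hasDerivAt_integral_of_dominated_loc_of_deriv_le (ball_mem_nhds t one_pos)
    (Eventually.of_forall fun s => (hα.continuous_det_fderiv s).aestronglyMeasurable)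
    (hα.integrableOn_det_fderiv hv hGm hGb hGfin t)
    (((hα.continuous_divergence_comp hv).comp (continuous_const.prodMk continuous_id)).mul
      (hα.continuous_det_fderiv t)).aestronglyMeasurable
    (ae_restrict_of_forall_mem hGm hbound) (integrableOn_const hGfin.ne)
    (ae_of_all _ fun y s _ => hα.hasDerivAt_det_fderiv hv y s)).2

end IsFlowMap

/-- Exact coarse-grained continuity equation: the volume-averaged density
`⟨ρ⟩(t)` of a solution of the continuity equation satisfies
`d/dt ⟨ρ⟩ = −⟨ρ⟩ ⟨div v⟩`. -/
theorem averaged_continuity_equation (v : ℝ → V3 → V3)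
    (hv : ContDiff ℝ 1 (fun p : ℝ × V3 => v p.1 p.2))
    (t₀ : ℝ) (α : ℝ → V3 → V3) (hα : IsFlowMap v t₀ α)
    (ρ : ℝ → V3 → ℝ) (hρ : ContDiff ℝ 1 (fun p : ℝ × V3 => ρ p.1 p.2))
    (hcont : ∀ t x, deriv (fun s => ρ s x) t + ∑ b, v t x b * pd (ρ t) b x
      = - ρ t x * ∑ a, pd (fun y => v t y a) a x)
    (G : Set V3) (hGo : IsOpen G) (hGb : Bornology.IsBounded G)
    (hGpos : 0 < volume G) (hGfin : volume G < ⊤) :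
    ∀ t, HasDerivAt (avg α G ρ)
      (-(avg α G ρ t) * avg α G (fun s x => ∑ a, pd (fun y => v s y a) a x) t) t := by
  intro t
  have hGm := hGo.measurableSet
  have hdiv : ∀ s x, ∑ a, pd (fun y => v s y a) a x = divergence (v s) x := fun s x =>
    (divergence_eq_sum_pd ((hv.comp (contDiff_const.prodMk contDiff_id)).differentiable
      one_ne_zero x)).symm
  have hcont' : ∀ t x, deriv (fun s => ρ s x) t + fderiv ℝ (ρ t) x (v t x)
      = -ρ t x * divergence (v t) x := fun t x => by
    rw [fderiv_apply_eq_sum_pd, hcont, hdiv]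
  have hρ_avg : avg α G ρ = fun s => (volAt α G s)⁻¹ * ∫ y in G, ρ t₀ y := funext fun s => by
    rw [avg, hα.setIntegral_image_eq_of_continuity_equation hv hρ hcont' hGm]
  have hdiv_avg : avg α G (fun s x => ∑ a, pd (fun y => v s y a) a x) t
      = (volAt α G t)⁻¹ * ∫ y in G, divergence (v t) (α t y) * (fderiv ℝ (α t) y).det := by
    simp_rw [avg, hdiv, hα.setIntegral_image hv hGm, mul_comm (fderiv ℝ (α t) _).det]
  have hV := hα.volAt_pos hv hGm hGb hGpos hGfin t
  rw [hρ_avg, hdiv_avg]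
  refine (((hα.hasDerivAt_volAt hv hGm hGb hGfin t).inv hV.ne').mul_const _).congr_deriv ?_
  field_simp
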